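/- arXiv:2302.13260 — 3 statements merged into one kernel-verified Lean document; each statement's English description precedes it below -/
import Mathlib

section
/- Let k ≥ 1 and let (x_1,y_1), …, (x_k,y_k) be points in ℕ² with all coordinates positive. Let P be the polygonal path (convex polygon) with vertices v_0 = (0,0) and v_m = (x_1+⋯+x_m, y_1+⋯+y_m) for 1 ≤ m ≤ k. If the slopes y_1/x_1 < y_2/x_2 < ⋯ < y_k/x_k are strictly increasing, then twice the area of the convex hull of {v_0, v_1, …, v_k} equals ∑_{1 ≤ l₁ < l₂ ≤ k} (x_{l₁} y_{l₂} − x_{l₂} y_{l₁}). -/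
/-!
Write `a ∧ b = a.1 * b.2 - a.2 * b.1`. The vertices `v₀ = 0, v₁, …, v_k` are the partial sums of
the edges `e_l = (x_l, y_l)`, and the slope condition says `e_i ∧ e_j > 0` for `i < j`. Adding
`v_{n+1}` to `v₀, …, v_n` therefore glues the triangle `0 v_n v_{n+1}` onto the hull along the
segment `[0, v_n]`: the line through `0` and `v_n` separates the two pieces. Twice the area is thus
the fan sum `∑_m v_m ∧ e_m = ∑_m ∑_{l<m} e_l ∧ e_m`. A triangle `0 a b` has area `|a ∧ b| / 2`
because it is the linear image of the triangle `0, (1,1), (1,0)`, and the diagonal cuts the unit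
square into that triangle and its mirror image.
-/

open MeasureTheory Finset

def wedge : ℝ × ℝ →ₗ[ℝ] ℝ × ℝ →ₗ[ℝ] ℝ :=
  LinearMap.mk₂ ℝ (fun a b => a.1 * b.2 - a.2 * b.1)
    (fun _ _ _ => by simp only [Prod.fst_add, Prod.snd_add]; ring)
    (fun _ _ _ => by simp only [Prod.smul_fst, Prod.smul_snd, smul_eq_mul]; ring)
    (fun _ _ _ => by simp only [Prod.fst_add, Prod.snd_add]; ring)
    (fun _ _ _ => by simp only [Prod.smul_fst, Prod.smul_snd, smul_eq_mul]; ring)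

@[simp]
lemma wedge_apply (a b : ℝ × ℝ) : wedge a b = a.1 * b.2 - a.2 * b.1 := rfl

lemma wedge_self (a : ℝ × ℝ) : wedge a a = 0 := by simp [mul_comm]

lemma wedge_swap (a b : ℝ × ℝ) : wedge b a = -wedge a b := by simp only [wedge_apply]; ring

/-- Cramer's rule in the plane. -/
lemma wedge_smul_eq (a b z : ℝ × ℝ) : wedge a b • z = wedge z b • a + wedge a z • b := by
  ext <;> simp only [wedge_apply, Prod.smul_fst, Prod.smul_snd, Prod.fst_add, Prod.snd_add,
    smul_eq_mul] <;> ring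

section Convexity

variable {E : Type*} [AddCommGroup E] [Module ℝ E]

lemma segment_subset_union_of_mem_segment {x y z : E} (hz : z ∈ segment ℝ x y) :
    segment ℝ x y ⊆ segment ℝ x z ∪ segment ℝ z y := by
  rw [segment_eq_image_lineMap] at hz
  obtain ⟨t, -, rfl⟩ := hz
  rw [← insert_endpoints_openSegment]
  rintro w (rfl | rfl | hw)
  · exact Or.inl (left_mem_segment ℝ _ _)
  · exact Or.inr (right_mem_segment ℝ _ _)
  · rcases openSegment_subset_union x y ⟨t, rfl⟩ hw with rfl | hw | hw
    · exact Or.inl (right_mem_segment ℝ _ _)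
    · exact Or.inl (openSegment_subset_segment ℝ _ _ hw)
    · exact Or.inr (openSegment_subset_segment ℝ _ _ hw)

lemma convexHull_insert_eq_union {s : Set E} {a b p : E} (ha : a ∈ s) (hb : b ∈ s)
    (ℓ : E →ₗ[ℝ] ℝ) (hℓs : ∀ q ∈ s, 0 ≤ ℓ q) (hℓp : ℓ p < 0)
    (hcross : ∀ r ∈ convexHull ℝ (insert p s), ℓ r = 0 → r ∈ segment ℝ a b) :
    convexHull ℝ (insert p s) = convexHull ℝ s ∪ convexHull ℝ {a, b, p} := by
  refine subset_antisymm ?_ (Set.union_subset (convexHull_mono (Set.subset_insert p s))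
    (convexHull_mono (by simp [Set.insert_subset_iff, ha, hb])))
  have hseg_s : segment ℝ a b ⊆ convexHull ℝ s :=
    (convex_convexHull ℝ s).segment_subset (subset_convexHull ℝ s ha) (subset_convexHull ℝ s hb)
  have hseg_T : segment ℝ a b ⊆ convexHull ℝ {a, b, p} :=
    (convex_convexHull ℝ _).segment_subset (subset_convexHull ℝ _ (by simp))
      (subset_convexHull ℝ _ (by simp))
  intro z hz
  rw [convexHull_insert ⟨a, ha⟩, convexJoin_singleton_left] at hz
  obtain ⟨q, hq, hzq⟩ := Set.mem_iUnion₂.1 hz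
  have hℓq : 0 ≤ ℓ q := convexHull_min hℓs (convex_halfSpace_ge ℓ.isLinear 0) hq
  obtain ⟨r, hr, hℓr⟩ : (0 : ℝ) ∈ ℓ '' segment ℝ p q := by
    rw [show ⇑ℓ = ℓ.toAffineMap from rfl, image_segment, segment_eq_Icc
      (show ℓ.toAffineMap p ≤ ℓ.toAffineMap q from hℓp.le.trans hℓq)]
    exact ⟨hℓp.le, hℓq⟩
  have hrseg := hcross r ((convex_convexHull ℝ _).segment_subset
    (subset_convexHull ℝ _ (Set.mem_insert p s))
    (convexHull_mono (Set.subset_insert p s) hq) hr) hℓr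
  rcases segment_subset_union_of_mem_segment hr hzq with hz | hz
  · exact Or.inr ((convex_convexHull ℝ _).segment_subset (subset_convexHull ℝ _ (by simp))
      (hseg_T hrseg) hz)
  · exact Or.inl ((convex_convexHull ℝ s).segment_subset (hseg_s hrseg) hq hz)

end Convexity

section Measure

variable {E : Type*} [NormedAddCommGroup E] [NormedSpace ℝ E] [MeasurableSpace E] [BorelSpace E]
  [FiniteDimensional ℝ E] (μ : Measure E) [μ.IsAddHaarMeasure]

lemma aedisjoint_of_nonneg_of_nonpos (ℓ : E →ₗ[ℝ] ℝ) (hℓ : ℓ ≠ 0) {s t : Set E}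
    (hs : ∀ z ∈ s, 0 ≤ ℓ z) (ht : ∀ z ∈ t, ℓ z ≤ 0) : AEDisjoint μ s t := by
  have hker : s ∩ t ⊆ LinearMap.ker ℓ := fun z hz => le_antisymm (ht z hz.2) (hs z hz.1)
  exact measure_mono_null hker (Measure.addHaar_submodule μ _ (by rwa [Ne, LinearMap.ker_eq_top]))

lemma measure_convexHull_insert {s : Set E} {a b p : E} (ha : a ∈ s) (hb : b ∈ s)
    (ℓ : E →ₗ[ℝ] ℝ) (hℓs : ∀ q ∈ s, 0 ≤ ℓ q) (hℓa : ℓ a = 0) (hℓb : ℓ b = 0) (hℓp : ℓ p < 0)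
    (hcross : ∀ r ∈ convexHull ℝ (insert p s), ℓ r = 0 → r ∈ segment ℝ a b) :
    μ (convexHull ℝ (insert p s)) = μ (convexHull ℝ s) + μ (convexHull ℝ {a, b, p}) := by
  rw [convexHull_insert_eq_union ha hb ℓ hℓs hℓp hcross]
  refine measure_union₀ ?_ (aedisjoint_of_nonneg_of_nonpos μ ℓ (by rintro rfl; simp at hℓp)
    (fun z hz => convexHull_min hℓs (convex_halfSpace_ge ℓ.isLinear 0) hz)
    (fun z hz => convexHull_min ?_ (convex_halfSpace_le ℓ.isLinear 0) hz))
  · exact ((Set.toFinite _).isCompact_convexHull ℝ).isClosed.measurableSet.nullMeasurableSet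
  · rintro z (rfl | rfl | rfl)
    exacts [hℓa.le, hℓb.le, hℓp.le]

end Measure

lemma volume_convexHull_triangle_eq_mul (a b : ℝ × ℝ) :
    volume (convexHull ℝ {0, a, b}) =
      ENNReal.ofReal |wedge a b| * volume (convexHull ℝ {(0 : ℝ × ℝ), (1, 1), (1, 0)}) := by
  set L : ℝ × ℝ →ₗ[ℝ] ℝ × ℝ :=
    (LinearMap.fst ℝ ℝ ℝ).smulRight b + (LinearMap.snd ℝ ℝ ℝ).smulRight (a - b) with hL
  have hdet : LinearMap.det L = -wedge a b := by
    rw [← LinearMap.det_toMatrix (Module.Basis.finTwoProd ℝ), Matrix.det_fin_two]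
    simp only [hL, LinearMap.toMatrix_apply, Module.Basis.finTwoProd_zero,
      Module.Basis.finTwoProd_one, Module.Basis.coe_finTwoProd_repr, LinearMap.add_apply,
      LinearMap.coe_smulRight, LinearMap.fst_apply, LinearMap.snd_apply, one_smul, zero_smul,
      add_zero, zero_add, Prod.fst_sub, Prod.snd_sub, Matrix.cons_val_zero, Matrix.cons_val_one,
      Matrix.cons_val_fin_one, wedge_apply]
    ring
  have himage : L '' convexHull ℝ {(0 : ℝ × ℝ), (1, 1), (1, 0)} = convexHull ℝ {0, a, b} := by
    rw [LinearMap.image_convexHull]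
    simp [hL, Set.image_insert_eq]
  rw [← himage, Measure.addHaar_image_linearMap, hdet, abs_neg]

lemma volume_convexHull_unitTriangle :
    volume (convexHull ℝ {(0 : ℝ × ℝ), (1, 1), (1, 0)}) = ENNReal.ofReal (1 / 2) := by
  have hcorners : insert ((1 : ℝ), (0 : ℝ)) {0, (1, 1), (0, 1)} =
      ({0, 1} : Set ℝ) ×ˢ ({0, 1} : Set ℝ) := by
    ext ⟨u, v⟩
    simp only [Set.mem_insert_iff, Set.mem_singleton_iff, Set.mem_prod, Prod.mk.injEq,
      Prod.mk_eq_zero]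
    tauto
  have hsquare : convexHull ℝ (insert ((1 : ℝ), (0 : ℝ)) {0, (1, 1), (0, 1)}) =
      Set.Icc (0 : ℝ) 1 ×ˢ Set.Icc (0 : ℝ) 1 := by
    rw [hcorners, convexHull_prod, convexHull_pair, segment_eq_Icc zero_le_one]
  have hdiag := measure_convexHull_insert volume (s := {0, (1, 1), (0, 1)}) (a := 0) (b := (1, 1))
    (p := ((1 : ℝ), (0 : ℝ))) (by simp) (by simp) (wedge (1, 1)) ?_ (by simp) (by simp) (by simp) ?_
  · have hunit : volume (Set.Icc (0 : ℝ) 1 ×ˢ Set.Icc (0 : ℝ) 1) = 1 := by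
      rw [Measure.volume_eq_prod, Measure.prod_prod]; simp
    rw [hsquare, hunit, volume_convexHull_triangle_eq_mul] at hdiag
    norm_num at hdiag
    rw [← two_mul] at hdiag
    rw [ENNReal.ofReal_div_of_pos two_pos, ENNReal.ofReal_one, ENNReal.ofReal_ofNat, one_div]
    exact ENNReal.eq_inv_of_mul_eq_one_left ((mul_comm _ _).trans hdiag.symm)
  · rintro q (rfl | rfl | rfl) <;> simp
  · intro r hr hwedge
    rw [hsquare] at hr
    simp only [wedge_apply] at hwedge
    refine (segment_eq_image ℝ (0 : ℝ × ℝ) (1, 1)).symm ▸ ⟨r.1, hr.1, ?_⟩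
    ext <;> simp only [smul_zero, Prod.smul_mk, smul_eq_mul, mul_one, zero_add]
    linarith

lemma volume_convexHull_triangle (a b : ℝ × ℝ) :
    volume (convexHull ℝ {0, a, b}) = ENNReal.ofReal (|wedge a b| / 2) := by
  rw [volume_convexHull_triangle_eq_mul, volume_convexHull_unitTriangle,
    ← ENNReal.ofReal_mul (abs_nonneg _), mul_one_div]

section Polygon

variable {e : ℕ → ℝ × ℝ} {n : ℕ}

lemma sum_sum_wedge_nonneg (hturn : ∀ i j, i < j → j < n → 0 < wedge (e i) (e j)) :
    0 ≤ ∑ m ∈ range n, ∑ l ∈ range m, wedge (e l) (e m) :=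
  sum_nonneg fun m hm => sum_nonneg fun l hl =>
    (hturn l m (mem_range.1 hl) (mem_range.1 hm)).le

lemma wedge_sum_range_nonneg (hturn : ∀ i j, i < j → j < n → 0 < wedge (e i) (e j)) {i m : ℕ}
    (him : i ≤ m) (hmn : m ≤ n) :
    0 ≤ wedge (∑ l ∈ range i, e l) (∑ l ∈ range m, e l) := by
  rw [← sum_range_add_sum_Ico e him, map_add, wedge_self, zero_add, LinearMap.map_sum₂]
  refine sum_nonneg fun a ha => ?_
  rw [map_sum]
  refine sum_nonneg fun b hb => (hturn a b ?_ ?_).le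
  · exact (mem_range.1 ha).trans_le (mem_Ico.1 hb).1
  · exact (mem_Ico.1 hb).2.trans_le hmn

lemma wedge_sum_range_le (hturn : ∀ i j, i < j → j < n → 0 < wedge (e i) (e j)) {i m : ℕ}
    (him : i ≤ m) (hmn : m < n) :
    wedge (e m) (∑ l ∈ range m, e l) ≤ wedge (e m) (∑ l ∈ range i, e l) := by
  rw [← sum_range_add_sum_Ico e him, map_add, add_le_iff_nonpos_right, map_sum]
  refine sum_nonpos fun l hl => ?_
  rw [wedge_swap, neg_nonpos]
  exact (hturn l m (mem_Ico.1 hl).2 hmn).le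

lemma wedge_sum_range_pos (hturn : ∀ i j, i < j → j < n → 0 < wedge (e i) (e j)) {m : ℕ}
    (hm : 1 ≤ m) (hmn : m < n) :
    0 < wedge (∑ l ∈ range m, e l) (e m) := by
  rw [LinearMap.map_sum₂]
  exact sum_pos (fun l hl => hturn l m (mem_range.1 hl) hmn) (nonempty_range_iff.2 (by omega))

/-- The hull lies on the same side as `v_n` of the line `0 v_{n+1}` and on the same side as `0` of
the edge line `v_n v_{n+1}`; these two half-planes cut the line `0 v_n` down to `[0, v_n]`. -/
lemma mem_segment_of_wedge_eq_zero (hturn : ∀ i j, i < j → j < n + 1 → 0 < wedge (e i) (e j))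
    (hn : 1 ≤ n) {r : ℝ × ℝ}
    (hr : r ∈ convexHull ℝ ((fun m => ∑ l ∈ range m, e l) '' Set.Iic (n + 1)))
    (hwedge : wedge r (∑ l ∈ range n, e l) = 0) :
    r ∈ segment ℝ 0 (∑ l ∈ range n, e l) := by
  set V := fun m => ∑ l ∈ range m, e l with hV
  have hc : 0 < wedge (V n) (e n) := wedge_sum_range_pos hturn hn n.lt_succ_self
  have hsucc : V (n + 1) = V n + e n := sum_range_succ e n
  have hleft : wedge (V (n + 1)) r ≤ 0 := by
    refine convexHull_min ?_ (convex_halfSpace_le (wedge (V (n + 1))).isLinear 0) hr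
    rintro _ ⟨i, hi, rfl⟩
    show wedge (V (n + 1)) (V i) ≤ 0
    rw [wedge_swap, neg_nonpos]
    exact wedge_sum_range_nonneg hturn hi le_rfl
  have hright : wedge (e n) (V n) ≤ wedge (e n) r := by
    refine convexHull_min ?_ (convex_halfSpace_ge (wedge (e n)).isLinear _) hr
    rintro _ ⟨i, hi, rfl⟩
    rcases (Set.mem_Iic.1 hi).eq_or_lt with rfl | hi
    · show wedge (e n) (V n) ≤ wedge (e n) (V (n + 1))
      rw [hsucc, map_add, wedge_self, add_zero]
    · exact wedge_sum_range_le hturn (Nat.lt_succ_iff.1 hi) n.lt_succ_self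
  have hcramer := wedge_smul_eq (V n) (V (n + 1)) r
  rw [wedge_swap r, hwedge, neg_zero, zero_smul, add_zero, hsucc, map_add, wedge_self, zero_add]
    at hcramer
  obtain ⟨s, hs⟩ : ∃ s, s = wedge r (V n + e n) / wedge (V n) (e n) := ⟨_, rfl⟩
  have hrs : r = s • V n := by
    rw [hs, div_eq_inv_mul, mul_smul, ← hcramer, inv_smul_smul₀ hc.ne']
  have hs0 : 0 ≤ s := by
    rw [hsucc, wedge_swap] at hleft
    exact hs ▸ div_nonneg (neg_nonpos.1 hleft) hc.le
  have hs1 : s ≤ 1 := by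
    rw [hrs, map_smul, smul_eq_mul, wedge_swap] at hright
    nlinarith
  exact (segment_eq_image ℝ 0 (V n)).symm ▸ ⟨s, ⟨hs0, hs1⟩, by simp [hrs]⟩

theorem volume_convexHull_partialSums (hturn : ∀ i j, i < j → j < n → 0 < wedge (e i) (e j)) :
    volume (convexHull ℝ ((fun m => ∑ l ∈ range m, e l) '' Set.Iic n)) =
      ENNReal.ofReal ((∑ m ∈ range n, ∑ l ∈ range m, wedge (e l) (e m)) / 2) := by
  set V := fun m => ∑ l ∈ range m, e l with hV
  induction n with
  | zero =>
    rw [show Set.Iic 0 = {0} from Set.Iic_bot, Set.image_singleton, convexHull_singleton]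
    simp
  | succ n ih =>
    rcases n.eq_zero_or_pos with rfl | hn
    · have hpair : V '' Set.Iic 1 = {0, e 0, e 0} := by
        ext z; simp [hV, Nat.le_one_iff_eq_zero_or_eq_one, or_comm, eq_comm]
      rw [hpair, volume_convexHull_triangle, wedge_self]
      simp
    have hinsert : V '' Set.Iic (n + 1) = insert (V (n + 1)) (V '' Set.Iic n) := by
      rw [← Set.image_insert_eq, ← Order.succ_eq_add_one, Order.Iic_succ]
    have h0 : (0 : ℝ × ℝ) ∈ V '' Set.Iic n := ⟨0, Set.mem_Iic.2 n.zero_le, sum_range_zero e⟩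
    have hsucc : V (n + 1) = V n + e n := sum_range_succ e n
    have hc := wedge_sum_range_pos hturn hn n.lt_succ_self
    rw [hinsert, measure_convexHull_insert volume h0 ⟨n, Set.mem_Iic.2 le_rfl, rfl⟩
      (wedge.flip (V n)) ?_ (map_zero _) (by rw [LinearMap.flip_apply, wedge_self]) ?_ ?_,
      ih fun i j hij hjn => hturn i j hij (by omega), volume_convexHull_triangle, hsucc, map_add,
      wedge_self, zero_add, abs_of_pos hc, ← ENNReal.ofReal_add, sum_range_succ _ n, add_div,
      LinearMap.map_sum₂]
    · exact div_nonneg (sum_sum_wedge_nonneg fun i j hij hjn => hturn i j hij (by omega))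
        zero_le_two
    · exact div_nonneg hc.le zero_le_two
    · rintro _ ⟨i, hi, rfl⟩
      exact wedge_sum_range_nonneg hturn hi n.le_succ
    · rw [LinearMap.flip_apply, wedge_swap, hsucc, map_add, wedge_self, zero_add]
      exact neg_lt_zero.2 hc
    · exact fun r hr hr0 => mem_segment_of_wedge_eq_zero hturn hn (hinsert ▸ hr) hr0

end Polygon

lemma Fin.sum_ite_val_lt_eq_sum_range {M : Type*} [AddCommMonoid M] {k m : ℕ} (hm : m ≤ k)
    (f : ℕ → M) : ∑ l : Fin k, (if (l : ℕ) < m then f l else 0) = ∑ l ∈ range m, f l := by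
  rw [Fin.sum_univ_eq_sum_range (fun l => if l < m then f l else 0), ← sum_filter]
  congr 1
  ext l
  simp only [mem_filter, mem_range]
  omega

section SlopeSequence

variable {k : ℕ} (x y : Fin k → ℕ)

def edges (l : ℕ) : ℝ × ℝ := if h : l < k then ((x ⟨l, h⟩ : ℝ), (y ⟨l, h⟩ : ℝ)) else 0

lemma edges_val (l : Fin k) : edges x y l = ((x l : ℝ), (y l : ℝ)) := by simp [edges]

lemma wedge_edges_pos {x y} (hx : ∀ l, 0 < x l)
    (hslope : ∀ l₁ l₂ : Fin k, l₁ < l₂ → (y l₁ : ℚ) / (x l₁ : ℚ) < (y l₂ : ℚ) / (x l₂ : ℚ))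
    {i j : ℕ} (hij : i < j) (hjk : j < k) : 0 < wedge (edges x y i) (edges x y j) := by
  have hslope_ij := hslope ⟨i, hij.trans hjk⟩ ⟨j, hjk⟩ hij
  rw [div_lt_div_iff₀ (by exact_mod_cast hx _) (by exact_mod_cast hx _),
    mul_comm _ ((x ⟨i, _⟩ : ℕ) : ℚ)] at hslope_ij
  simp only [edges, dif_pos (hij.trans hjk), dif_pos hjk, wedge_apply, sub_pos]
  exact_mod_cast hslope_ij

end SlopeSequence

theorem stmt1_general (k : ℕ) (x y : Fin k → ℕ)
    (hx : ∀ l, 0 < x l)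
    (hslope : ∀ l₁ l₂ : Fin k, l₁ < l₂ → (y l₁ : ℚ) / (x l₁ : ℚ) < (y l₂ : ℚ) / (x l₂ : ℚ))
    (v : Fin (k + 1) → ℝ × ℝ)
    (hv : ∀ m : Fin (k + 1),
      v m = ((∑ l : Fin k, if (l : ℕ) < (m : ℕ) then (x l : ℝ) else 0),
             (∑ l : Fin k, if (l : ℕ) < (m : ℕ) then (y l : ℝ) else 0))) :
    2 * (volume (convexHull ℝ (Set.range v))).toReal =
      ∑ l₂ : Fin k, ∑ l₁ : Fin k, if l₁ < l₂ then
        ((x l₁ : ℝ) * (y l₂ : ℝ) - (x l₂ : ℝ) * (y l₁ : ℝ)) else 0 := by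
  have hvV (m : Fin (k + 1)) : v m = ∑ l ∈ range m, edges x y l := by
    rw [hv m, ← Fin.sum_ite_val_lt_eq_sum_range (Nat.lt_succ_iff.1 m.2), Prod.ext_iff,
      Prod.fst_sum, Prod.snd_sum]
    simp [apply_ite, edges_val]
  have hrange : Set.range v = (fun m => ∑ l ∈ range m, edges x y l) '' Set.Iic k := by
    rw [show v = (fun m => ∑ l ∈ range m, edges x y l) ∘ Fin.val from funext hvV,
      Set.range_comp, Fin.range_val, Set.Iio_add_one_eq_Iic]
  have hsum : (∑ l₂ : Fin k, ∑ l₁ : Fin k, if l₁ < l₂ then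
        ((x l₁ : ℝ) * (y l₂ : ℝ) - (x l₂ : ℝ) * (y l₁ : ℝ)) else 0) =
      ∑ m ∈ range k, ∑ l ∈ range m, wedge (edges x y l) (edges x y m) := by
    rw [← Fin.sum_univ_eq_sum_range (fun m => ∑ l ∈ range m, wedge (edges x y l) (edges x y m))]
    refine Fintype.sum_congr _ _ fun l₂ => ?_
    rw [← Fin.sum_ite_val_lt_eq_sum_range l₂.2.le]
    refine Fintype.sum_congr _ _ fun l₁ => ?_
    simp only [Fin.lt_def, edges_val, wedge_apply, mul_comm ((y l₁ : ℕ) : ℝ)]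
  have hturn (i j : ℕ) (hij : i < j) (hjk : j < k) := wedge_edges_pos hx hslope hij hjk
  rw [hrange, volume_convexHull_partialSums hturn, hsum, ENNReal.toReal_ofReal]
  · ring
  · exact div_nonneg (sum_sum_wedge_nonneg hturn) zero_le_two

/-- If `(x₁,y₁), …, (x_k,y_k)` are pairs of positive naturals with strictly increasing slopes,
and `v₀ = (0,0)`, `v_m = (x₁+⋯+x_m, y₁+⋯+y_m)`, then twice the area of the convex hull of
`{v₀, …, v_k}` equals `∑_{l₁<l₂} (x_{l₁} y_{l₂} − x_{l₂} y_{l₁})`. -/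
theorem stmt1 (k : ℕ) (hk : 1 ≤ k) (x y : Fin k → ℕ)
    (hx : ∀ l, 0 < x l) (hy : ∀ l, 0 < y l)
    (hslope : ∀ l₁ l₂ : Fin k, l₁ < l₂ → (y l₁ : ℚ) / (x l₁ : ℚ) < (y l₂ : ℚ) / (x l₂ : ℚ))
    (v : Fin (k + 1) → ℝ × ℝ)
    (hv : ∀ m : Fin (k + 1),
      v m = ((∑ l : Fin k, if (l : ℕ) < (m : ℕ) then (x l : ℝ) else 0),
             (∑ l : Fin k, if (l : ℕ) < (m : ℕ) then (y l : ℝ) else 0))) :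
    2 * (volume (convexHull ℝ (Set.range v))).toReal =
      ∑ l₂ : Fin k, ∑ l₁ : Fin k, if l₁ < l₂ then
        ((x l₁ : ℝ) * (y l₂ : ℝ) - (x l₂ : ℝ) * (y l₁ : ℝ)) else 0 :=
  stmt1_general k x y hx hslope v hv
end

section
/- Fix positive integers i, j and let Δ be the triangle with vertices (0,0), (i,0), (i,j). There is a bijection, for each k ≥ 1, between the set C_k of tuples ((x_l,y_l))_{l≤k} of pairs of positive integers with x_1+⋯+x_k = i, y_1+⋯+y_k = j, and y_1/x_1 < ⋯ < y_k/x_k, and the set of convex (k+1)-gons P with lattice-point vertices contained in Δ, having the segment L from (0,0) to (i,j) as an edge, and touching neither the horizontal edge nor the vertical edge of Δ except at (0,0) and (i,j). The bijection sends ((x_l,y_l)) to the polygon with vertices (0,0), (x_1,y_1), (x_1+x_2, y_1+y_2), …, (i,j). -/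
/-!
For vectors `u`, `v` pointing to the right, `0 < cross u v = u.1 v.2 - u.2 v.1` says that `v`
is steeper than `u`. The tuple is the list of edge vectors of the lower boundary of the polygon,
read from `(0,0)` to `(i,j)`, and the vertices are its partial sums `P_0, …, P_k`.

If the slopes increase, choose for each `m` a direction `d` steeper than the edges before `P_m`
and less steep than those after it; then `p ↦ cross d p` attains its strict minimum over the
vertices at `P_m` alone, so no vertex is in the convex hull of the others. Expanding
`cross P_m (P_k - P_m)` bilinearly gives a sum of positive terms, which puts `P_m` strictly
below `L`.

Conversely, if a vertex `p` of a polygon lies on or above the chord of two vertices `a`, `b`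
with `a.1 ≤ p.1 ≤ b.1`, then, being below `L`, it lies in the hull of `a`, `b`, `(0,0)` and
`(i,j)`. Taking `b = (i,j)` shows that distinct vertices have distinct abscissae; sorted by
abscissa, taking `a`, `b` the neighbours of `p` shows that the slopes of the edges increase.
-/

open Finset

namespace LatticePolygon

section Cross

variable {R : Type*} [CommRing R]

def cross (u v : R × R) : R := u.1 * v.2 - u.2 * v.1

lemma cross_self (u : R × R) : cross u u = 0 := by simp only [cross]; ring

lemma cross_swap (u v : R × R) : cross u v = -cross v u := by simp only [cross]; ring

lemma cross_add_right (u v w : R × R) : cross u (v + w) = cross u v + cross u w := by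
  simp only [cross, Prod.fst_add, Prod.snd_add]; ring

lemma cross_add_left (u v w : R × R) : cross (u + v) w = cross u w + cross v w := by
  simp only [cross, Prod.fst_add, Prod.snd_add]; ring

lemma cross_sum_right {ι : Type*} (s : Finset ι) (u : R × R) (v : ι → R × R) :
    cross u (∑ b ∈ s, v b) = ∑ b ∈ s, cross u (v b) := by
  simp only [cross, Prod.fst_sum, Prod.snd_sum, mul_sum, sum_sub_distrib]

lemma cross_sum_sum {ι κ : Type*} (s : Finset ι) (t : Finset κ) (u : ι → R × R)
    (v : κ → R × R) :
    cross (∑ a ∈ s, u a) (∑ b ∈ t, v b) = ∑ a ∈ s, ∑ b ∈ t, cross (u a) (v b) := by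
  simp only [cross, Prod.fst_sum, Prod.snd_sum, sum_mul_sum, sum_sub_distrib]

end Cross

lemma div_lt_div_iff_cross_pos {x₁ y₁ x₂ y₂ : ℤ} (h₁ : 0 < x₁) (h₂ : 0 < x₂) :
    (y₁ : ℚ) / x₁ < (y₂ : ℚ) / x₂ ↔ 0 < cross (x₁, y₁) (x₂, y₂) := by
  rw [div_lt_div_iff₀ (by exact_mod_cast h₁) (by exact_mod_cast h₂), cross, sub_pos, mul_comm x₁]
  norm_cast

lemma strictMono_slope_of_cross_pos {k : ℕ} {D : Fin k → ℤ × ℤ} (hx : ∀ l, 0 < (D l).1)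
    (h : ∀ l l' : Fin k, (l' : ℕ) = l + 1 → 0 < cross (D l) (D l')) :
    StrictMono fun l => ((D l).2 : ℚ) / (D l).1 := by
  cases k with
  | zero => exact fun l => l.elim0
  | succ k =>
    exact Fin.strictMono_iff_lt_succ.2 fun l =>
      (div_lt_div_iff_cross_pos (hx _) (hx _)).2 (h _ _ rfl)

lemma exists_mem_segment_fst_eq {a b p : ℝ × ℝ} (hab : a.1 < b.1) (hap : a.1 ≤ p.1)
    (hpb : p.1 ≤ b.1) :
    ∃ q ∈ segment ℝ a b, q.1 = p.1 ∧ cross (b - a) (p - a) = (b.1 - a.1) * (p.2 - q.2) := by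
  set t := (p.1 - a.1) / (b.1 - a.1)
  have hba : 0 < b.1 - a.1 := sub_pos.2 hab
  have ht : t * (b.1 - a.1) = p.1 - a.1 := div_mul_cancel₀ _ hba.ne'
  refine ⟨a + t • (b - a), ?_, ?_, ?_⟩
  · rw [segment_eq_image']
    exact ⟨t, ⟨div_nonneg (by linarith) hba.le, (div_le_one hba).2 (by linarith)⟩, rfl⟩
  · simp only [Prod.fst_add, Prod.smul_fst, Prod.fst_sub, smul_eq_mul]; linarith
  · simp only [cross, Prod.snd_add, Prod.smul_snd, Prod.fst_sub, Prod.snd_sub, smul_eq_mul]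
    linear_combination (b.2 - a.2) * ht

lemma mem_convexHull_of_between {a b c d p : ℝ × ℝ}
    (hab : a.1 < b.1) (hap : a.1 ≤ p.1) (hpb : p.1 ≤ b.1) (habp : 0 ≤ cross (b - a) (p - a))
    (hcd : c.1 < d.1) (hcp : c.1 ≤ p.1) (hpd : p.1 ≤ d.1) (hcdp : cross (d - c) (p - c) ≤ 0) :
    p ∈ convexHull ℝ {a, b, c, d} := by
  obtain ⟨q, hq, hq₁, hq₂⟩ := exists_mem_segment_fst_eq hab hap hpb
  obtain ⟨r, hr, hr₁, hr₂⟩ := exists_mem_segment_fst_eq hcd hcp hpd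
  have hqp : q.2 ≤ p.2 := by nlinarith
  have hpr : p.2 ≤ r.2 := by nlinarith
  have hpqr : p ∈ segment ℝ q r := by
    rw [← Prod.mk.eta (p := q), ← Prod.mk.eta (p := r), hq₁, hr₁, ← Prod.image_mk_segment_right,
      segment_eq_Icc (hqp.trans hpr)]
    exact ⟨p.2, ⟨hqp, hpr⟩, rfl⟩
  exact (convex_convexHull ℝ _).segment_subset
    (segment_subset_convexHull (by simp) (by simp) hq)
    (segment_subset_convexHull (by simp) (by simp) hr) hpqr

lemma notMem_convexHull_of_forall_lt {𝕜 E : Type*} [Field 𝕜] [LinearOrder 𝕜]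
    [IsStrictOrderedRing 𝕜] [AddCommGroup E] [Module 𝕜 E] (ℓ : E →ₗ[𝕜] 𝕜) {s : Set E} {x : E}
    (h : ∀ y ∈ s, ℓ x < ℓ y) : x ∉ convexHull 𝕜 s := fun hx =>
  lt_irrefl (ℓ x) (convexHull_min h (convex_halfSpace_gt ℓ.isLinear (ℓ x)) hx)

def toPlane (p : ℤ × ℤ) : ℝ × ℝ := ((p.1 : ℝ), (p.2 : ℝ))

lemma toPlane_sub (p q : ℤ × ℤ) : toPlane (p - q) = toPlane p - toPlane q := by
  simp [toPlane]

lemma cross_toPlane (p q : ℤ × ℤ) : cross (toPlane p) (toPlane q) = cross p q := by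
  simp [cross, toPlane]

lemma toPlane_mem_convexHull_of_between {a b c d p : ℤ × ℤ}
    (hab : a.1 < b.1) (hap : a.1 ≤ p.1) (hpb : p.1 ≤ b.1) (habp : 0 ≤ cross (b - a) (p - a))
    (hcd : c.1 < d.1) (hcp : c.1 ≤ p.1) (hpd : p.1 ≤ d.1) (hcdp : cross (d - c) (p - c) ≤ 0) :
    toPlane p ∈ convexHull ℝ (toPlane '' {a, b, c, d}) := by
  simp only [Set.image_insert_eq, Set.image_singleton]
  apply mem_convexHull_of_between
  all_goals first
    | rw [← toPlane_sub, ← toPlane_sub, cross_toPlane]; exact_mod_cast ‹_›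
    | simp only [toPlane]; exact_mod_cast ‹_›

lemma toPlane_notMem_convexHull {d p : ℤ × ℤ} {S : Set (ℤ × ℤ)}
    (h : ∀ q ∈ S, cross d p < cross d q) : toPlane p ∉ convexHull ℝ (toPlane '' S) := by
  let ℓ : ℝ × ℝ →ₗ[ℝ] ℝ := (d.1 : ℝ) • LinearMap.snd ℝ ℝ ℝ - (d.2 : ℝ) • LinearMap.fst ℝ ℝ ℝ
  have hℓ (q : ℤ × ℤ) : ℓ (toPlane q) = cross d q := by simp [ℓ, cross, toPlane]
  refine notMem_convexHull_of_forall_lt ℓ ?_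
  rintro _ ⟨q, hq, rfl⟩
  rw [hℓ, hℓ]
  exact_mod_cast h q hq

section PartialSums

variable {M : Type*} [AddCommMonoid M] [PartialOrder M] [IsOrderedCancelAddMonoid M]
  {c : ℕ → M} {m m' : ℕ}

lemma sum_range_lt_sum_range_of_pos (h : m < m') (hc : ∀ n ∈ Ico m m', 0 < c n) :
    ∑ n ∈ range m, c n < ∑ n ∈ range m', c n := by
  rw [← sum_range_add_sum_Ico c h.le]
  exact lt_add_of_pos_right _ (sum_pos hc (nonempty_Ico.2 h))

lemma sum_range_lt_sum_range_of_neg (h : m' < m) (hc : ∀ n ∈ Ico m' m, c n < 0) :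
    ∑ n ∈ range m, c n < ∑ n ∈ range m', c n := by
  rw [← sum_range_add_sum_Ico c h.le]
  exact add_lt_of_neg_right _ (sum_neg hc (nonempty_Ico.2 h))

end PartialSums

def InOpenTriangle (i j : ℤ) (v : ℤ × ℤ) : Prop := 0 < v.2 ∧ v.1 < i ∧ i * v.2 < j * v.1

def ConvexPosition (V : Finset (ℤ × ℤ)) : Prop :=
  ∀ v ∈ V, toPlane v ∉ convexHull ℝ (toPlane '' ↑(V.erase v))

def IsDiagonalPolygon (i j : ℤ) (k : ℕ) (V : Finset (ℤ × ℤ)) : Prop :=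
  V.card = k + 1 ∧ (0, 0) ∈ V ∧ (i, j) ∈ V ∧ ConvexPosition V ∧
    ∀ v ∈ V, v ≠ (0, 0) → v ≠ (i, j) → InOpenTriangle i j v

structure IsConvexChain (E : ℕ → ℤ × ℤ) (k : ℕ) : Prop where
  fst_pos : ∀ n < k, 0 < (E n).1
  snd_pos : ∀ n < k, 0 < (E n).2
  cross_pos : ∀ a b, a < b → b < k → 0 < cross (E a) (E b)

namespace IsConvexChain

variable {E : ℕ → ℤ × ℤ} {k m m' : ℕ} {i j : ℤ}

lemma fst_sum_lt (hE : IsConvexChain E k) (h : m < m') (hm' : m' ≤ k) :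
    (∑ n ∈ range m, E n).1 < (∑ n ∈ range m', E n).1 := by
  simp only [Prod.fst_sum]
  exact sum_range_lt_sum_range_of_pos h fun n hn => hE.fst_pos n ((mem_Ico.1 hn).2.trans_le hm')

lemma snd_sum_lt (hE : IsConvexChain E k) (h : m < m') (hm' : m' ≤ k) :
    (∑ n ∈ range m, E n).2 < (∑ n ∈ range m', E n).2 := by
  simp only [Prod.snd_sum]
  exact sum_range_lt_sum_range_of_pos h fun n hn => hE.snd_pos n ((mem_Ico.1 hn).2.trans_le hm')

lemma cross_nonneg (hE : IsConvexChain E k) {a b : ℕ} (h : a ≤ b) (hb : b < k) :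
    0 ≤ cross (E a) (E b) := by
  rcases h.lt_or_eq with h | rfl
  · exact (hE.cross_pos a b h hb).le
  · rw [cross_self]

lemma exists_separating_direction (hE : IsConvexChain E k) (hm : m ≤ k) :
    ∃ d : ℤ × ℤ, (∀ n < m, 0 < cross (E n) d) ∧ ∀ n, m ≤ n → n < k → 0 < cross d (E n) := by
  rcases Nat.eq_zero_or_pos m with rfl | hm₀
  · refine ⟨(1, 0), fun n hn => absurd hn n.not_lt_zero, fun n _ hn => ?_⟩
    simpa [cross] using hE.snd_pos n hn
  rcases hm.lt_or_eq with hmk | rfl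
  · refine ⟨E (m - 1) + E m, fun n hn => ?_, fun n hn hnk => ?_⟩
    · rw [cross_add_right]
      exact add_pos_of_nonneg_of_pos (hE.cross_nonneg (by omega) (by omega))
        (hE.cross_pos n m hn hmk)
    · rw [cross_add_left]
      exact add_pos_of_pos_of_nonneg (hE.cross_pos (m - 1) n (by omega) hnk)
        (hE.cross_nonneg hn hnk)
  · refine ⟨(0, 1), fun n hn => ?_, fun n hn hnk => absurd hnk (not_lt.2 hn)⟩
    simpa [cross] using hE.fst_pos n hn

lemma exists_cross_sum_lt (hE : IsConvexChain E k) (hm : m ≤ k) :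
    ∃ d : ℤ × ℤ, ∀ m' ≤ k, m' ≠ m →
      cross d (∑ n ∈ range m, E n) < cross d (∑ n ∈ range m', E n) := by
  obtain ⟨d, hbefore, hafter⟩ := hE.exists_separating_direction hm
  refine ⟨d, fun m' hm' hne => ?_⟩
  simp only [cross_sum_right]
  rcases hne.lt_or_gt with h | h
  · refine sum_range_lt_sum_range_of_neg h fun n hn => ?_
    rw [cross_swap, neg_neg_iff_pos]
    exact hbefore n (mem_Ico.1 hn).2
  · exact sum_range_lt_sum_range_of_pos h fun n hn =>
      hafter n (mem_Ico.1 hn).1 ((mem_Ico.1 hn).2.trans_le hm')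

lemma cross_sum_pos (hE : IsConvexChain E k) (hm₀ : 0 < m) (hmk : m < k) :
    0 < cross (∑ n ∈ range m, E n) (∑ n ∈ range k, E n) := by
  rw [← sum_range_add_sum_Ico E hmk.le, cross_add_right, cross_self, zero_add, cross_sum_sum]
  refine sum_pos (fun a ha => sum_pos (fun b hb => ?_) (nonempty_Ico.2 hmk))
    (nonempty_range_iff.2 hm₀.ne')
  rw [mem_range] at ha
  rw [mem_Ico] at hb
  exact hE.cross_pos a b (ha.trans_le hb.1) hb.2

lemma strictMono_fst_sum (hE : IsConvexChain E k) :
    StrictMono fun m : Fin (k + 1) => (∑ n ∈ range m, E n).1 :=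
  fun _ m' h => hE.fst_sum_lt h (Nat.lt_succ_iff.1 m'.2)

lemma isDiagonalPolygon_image (hE : IsConvexChain E k) (hend : ∑ n ∈ range k, E n = (i, j)) :
    IsDiagonalPolygon i j k (univ.image fun m : Fin (k + 1) => ∑ n ∈ range m, E n) := by
  have hinj : Function.Injective fun m : Fin (k + 1) => ∑ n ∈ range m, E n :=
    .of_comp hE.strictMono_fst_sum.injective
  refine ⟨?_, mem_image.2 ⟨0, mem_univ _, by simp [Prod.zero_eq_mk]⟩,
    mem_image.2 ⟨Fin.last k, mem_univ _, hend⟩, ?_, ?_⟩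
  · rw [card_image_of_injective _ hinj, card_univ, Fintype.card_fin]
  · simp only [ConvexPosition, forall_mem_image, mem_univ, true_implies]
    intro m
    obtain ⟨d, hd⟩ := hE.exists_cross_sum_lt (Nat.lt_succ_iff.1 m.2)
    refine toPlane_notMem_convexHull (d := d) fun q hq => ?_
    obtain ⟨hne, hq⟩ := mem_erase.1 hq
    obtain ⟨m', -, rfl⟩ := mem_image.1 hq
    exact hd m' (Nat.lt_succ_iff.1 m'.2) fun h => hne (by rw [Fin.ext h])
  · simp only [forall_mem_image, mem_univ, true_implies]
    intro m h0 hij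
    have hm₀ : 0 < (m : ℕ) := Nat.pos_of_ne_zero fun h => h0 (by simp [h, Prod.zero_eq_mk])
    have hmk : (m : ℕ) < k := (Nat.lt_succ_iff.1 m.2).lt_of_ne fun h => hij (by rw [h, hend])
    refine ⟨?_, ?_, ?_⟩
    · simpa using hE.snd_sum_lt hm₀ hmk.le
    · simpa [hend] using hE.fst_sum_lt hmk le_rfl
    · have := hE.cross_sum_pos hm₀ hmk
      rw [hend, cross] at this
      linarith

end IsConvexChain

section SortedEnumeration

variable {α β : Type*} [LinearOrder α] [DecidableEq β] {n : ℕ}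

lemma exists_strictMono_fst_of_injOn {V : Finset (α × β)}
    (hV : Set.InjOn Prod.fst (V : Set (α × β))) (hcard : V.card = n) :
    ∃ Q : Fin n → α × β, StrictMono (fun m => (Q m).1) ∧ univ.image Q = V := by
  have hW : (V.image Prod.fst).card = n := by rw [card_image_of_injOn hV, hcard]
  have hex (m : Fin n) : ∃ v ∈ V, v.1 = (V.image Prod.fst).orderEmbOfFin hW m :=
    mem_image.1 (orderEmbOfFin_mem _ hW m)
  choose Q hQV hQ using hex
  have hmono : StrictMono fun m => (Q m).1 := by
    simpa only [hQ] using ((V.image Prod.fst).orderEmbOfFin hW).strictMono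
  refine ⟨Q, hmono, eq_of_subset_of_card_le (fun v hv => ?_) ?_⟩
  · obtain ⟨m, -, rfl⟩ := mem_image.1 hv
    exact hQV m
  · rw [card_image_of_injective _ hmono.injective.of_comp, card_univ, Fintype.card_fin, hcard]

lemma eq_of_strictMono_fst [Preorder β] {Q Q' : Fin n → α × β}
    (hQ : StrictMono fun m => (Q m).1) (hQ' : StrictMono fun m => (Q' m).1)
    (h : univ.image Q = univ.image Q') : Q = Q' := by
  have hlex {Q : Fin n → α × β} (hQ : StrictMono fun m => (Q m).1) : StrictMono (toLex ∘ Q) :=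
    fun _ _ hab => Prod.Lex.toLex_lt_toLex.2 (.inl (hQ hab))
  have hrange : Set.range Q = Set.range Q' := by
    rw [← Set.image_univ, ← Set.image_univ, ← coe_univ, ← coe_image, ← coe_image, h]
  have := ((hlex hQ).range_inj (hlex hQ')).1 (by rw [Set.range_comp, Set.range_comp, hrange])
  exact funext fun m => toLex.injective (congrFun this m)

end SortedEnumeration

lemma InOpenTriangle.fst_pos {i j : ℤ} {v : ℤ × ℤ} (hv : InOpenTriangle i j v) (hi : 0 < i)
    (hj : 0 < j) : 0 < v.1 :=
  pos_of_mul_pos_right ((mul_pos hi hv.1).trans hv.2.2) hj.le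

namespace IsDiagonalPolygon

variable {i j : ℤ} {k : ℕ} {V : Finset (ℤ × ℤ)}

lemma fst_mem_Icc (hV : IsDiagonalPolygon i j k V) (hi : 0 < i) (hj : 0 < j) {v : ℤ × ℤ}
    (hv : v ∈ V) : 0 ≤ v.1 ∧ v.1 ≤ i := by
  by_cases h0 : v = (0, 0)
  · simp [h0, hi.le]
  by_cases hij : v = (i, j)
  · simp [hij, hi.le]
  have hvΔ := hV.2.2.2.2 v hv h0 hij
  exact ⟨(hvΔ.fst_pos hi hj).le, hvΔ.2.1.le⟩

lemma snd_pos (hV : IsDiagonalPolygon i j k V) (hj : 0 < j) {v : ℤ × ℤ} (hv : v ∈ V)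
    (h0 : v ≠ (0, 0)) : 0 < v.2 := by
  by_cases hij : v = (i, j)
  · simpa [hij]
  exact (hV.2.2.2.2 v hv h0 hij).1

/-- Otherwise `p` would lie in the convex hull of `a`, `b`, `(0,0)` and `(i,j)`. -/
lemma cross_neg (hV : IsDiagonalPolygon i j k V) (hi : 0 < i) (hj : 0 < j) {a b p : ℤ × ℤ}
    (ha : a ∈ V) (hb : b ∈ V) (hp : p ∈ V) (hap : a ≠ p) (hbp : b ≠ p)
    (hpΔ : InOpenTriangle i j p) (hab : a.1 < b.1) (hap₁ : a.1 ≤ p.1) (hpb₁ : p.1 ≤ b.1) :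
    cross (b - a) (p - a) < 0 := by
  obtain ⟨-, h00, hij, hconv, -⟩ := hV
  by_contra! habp
  have hsub : ({a, b, (0, 0), (i, j)} : Set (ℤ × ℤ)) ⊆ ↑(V.erase p) := by
    simp only [Set.insert_subset_iff, Set.singleton_subset_iff, coe_erase, Set.mem_sdiff,
      mem_coe, Set.mem_singleton_iff]
    exact ⟨⟨ha, hap⟩, ⟨hb, hbp⟩, ⟨h00, fun h => hpΔ.1.ne' (by simp [← h])⟩,
      ⟨hij, fun h => hpΔ.2.1.ne' (by simp [← h])⟩⟩
  refine hconv p hp (convexHull_mono (Set.image_mono hsub) ?_)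
  refine toPlane_mem_convexHull_of_between hab hap₁ hpb₁ habp (by simpa using hi)
    (by simpa using (hpΔ.fst_pos hi hj).le) (by simpa using hpΔ.2.1.le) ?_
  simpa [cross] using hpΔ.2.2.le

lemma injOn_fst (hV : IsDiagonalPolygon i j k V) (hi : 0 < i) (hj : 0 < j) :
    Set.InjOn Prod.fst (V : Set (ℤ × ℤ)) := by
  have hnot_above : ∀ v ∈ V, ∀ w ∈ V, v.1 = w.1 → ¬ v.2 < w.2 := by
    intro v hv w hw h₁ h₂
    have hw0 : w ≠ (0, 0) := by
      rintro rfl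
      by_cases hv0 : v = (0, 0)
      · simp [hv0] at h₂
      · exact h₂.not_gt (hV.snd_pos hj hv hv0)
    have hwij : w ≠ (i, j) := by
      rintro rfl
      have hv0 : v ≠ (0, 0) := fun h => hi.ne (by simp_all)
      have hvij : v ≠ (i, j) := fun h => h₂.ne (by simp [h])
      exact (hV.2.2.2.2 v hv hv0 hvij).2.1.ne h₁
    have hwΔ := hV.2.2.2.2 w hw hw0 hwij
    have := hV.cross_neg hi hj hv hV.2.2.1 hw (fun h => h₂.ne (by rw [h]))
      (Ne.symm hwij) hwΔ (h₁ ▸ hwΔ.2.1) h₁.le hwΔ.2.1.le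
    simp only [cross, Prod.fst_sub, Prod.snd_sub, h₁, sub_self, mul_zero, sub_zero] at this
    nlinarith [hwΔ.2.1]
  intro v hv w hw h
  rcases lt_trichotomy v.2 w.2 with h₂ | h₂ | h₂
  · exact absurd h₂ (hnot_above v hv w hw h)
  · exact Prod.ext h h₂
  · exact absurd h₂ (hnot_above w hw v hv h.symm)

lemma exists_sorted_enumeration (hV : IsDiagonalPolygon i j k V) (hi : 0 < i) (hj : 0 < j) :
    ∃ Q : Fin (k + 1) → ℤ × ℤ, StrictMono (fun m => (Q m).1) ∧ univ.image Q = V ∧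
      Q 0 = (0, 0) ∧ Q (Fin.last k) = (i, j) := by
  obtain ⟨Q, hQ, hQV⟩ := exists_strictMono_fst_of_injOn (hV.injOn_fst hi hj) hV.1
  have hmem (m) : Q m ∈ V := hQV ▸ mem_image_of_mem Q (mem_univ m)
  refine ⟨Q, hQ, hQV, ?_, ?_⟩
  · obtain ⟨m, -, hm⟩ := mem_image.1 (hQV ▸ hV.2.1)
    suffices m = 0 by rw [← this, hm]
    by_contra hm0
    have : (Q 0).1 < (Q m).1 := hQ (Fin.pos_iff_ne_zero.2 hm0)
    rw [hm] at this
    exact this.not_ge (hV.fst_mem_Icc hi hj (hmem 0)).1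
  · obtain ⟨m, -, hm⟩ := mem_image.1 (hQV ▸ hV.2.2.1)
    suffices m = Fin.last k by rw [← this, hm]
    by_contra hmk
    have : (Q m).1 < (Q (Fin.last k)).1 := hQ (Fin.lt_last_iff_ne_last.2 hmk)
    rw [hm] at this
    exact this.not_ge (hV.fst_mem_Icc hi hj (hmem _)).2

lemma cross_pos_of_sorted (hV : IsDiagonalPolygon i j k V) (hi : 0 < i) (hj : 0 < j)
    {Q : Fin (k + 1) → ℤ × ℤ} (hQ : StrictMono fun m => (Q m).1) (hQV : univ.image Q = V)
    {l l' : Fin k} (hll' : (l' : ℕ) = l + 1) :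
    0 < cross (Q l.succ - Q l.castSucc) (Q l'.succ - Q l'.castSucc) := by
  have hmem (m) : Q m ∈ V := hQV ▸ mem_image_of_mem Q (mem_univ m)
  have hl' : l'.castSucc = l.succ := Fin.ext (by simp [hll'])
  rw [hl']
  have h₁ : (Q l.castSucc).1 < (Q l.succ).1 := hQ Fin.castSucc_lt_succ
  have h₂ : (Q l.succ).1 < (Q l'.succ).1 := hl' ▸ hQ Fin.castSucc_lt_succ
  have hpΔ : InOpenTriangle i j (Q l.succ) := by
    refine hV.2.2.2.2 _ (hmem _) (fun h => ?_) (fun h => ?_)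
    · exact h₁.not_ge (by simpa [h] using (hV.fst_mem_Icc hi hj (hmem l.castSucc)).1)
    · exact h₂.not_ge (by simpa [h] using (hV.fst_mem_Icc hi hj (hmem l'.succ)).2)
  have := hV.cross_neg hi hj (hmem _) (hmem _) (hmem l.succ) (fun h => h₁.ne (by rw [h]))
    (fun h => h₂.ne' (by rw [h])) hpΔ (h₁.trans h₂) h₁.le h₂.le
  simp only [cross, Prod.fst_sub, Prod.snd_sub] at this ⊢
  linarith

lemma edge_pos_and_strictMono_slope_of_sorted (hV : IsDiagonalPolygon i j k V) (hi : 0 < i)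
    (hj : 0 < j) {Q : Fin (k + 1) → ℤ × ℤ} (hQ : StrictMono fun m => (Q m).1)
    (hQV : univ.image Q = V) (hQ0 : Q 0 = (0, 0)) :
    (∀ l : Fin k, 0 < (Q l.succ - Q l.castSucc).1 ∧ 0 < (Q l.succ - Q l.castSucc).2) ∧
      StrictMono fun l : Fin k =>
        ((Q l.succ - Q l.castSucc).2 : ℚ) / (Q l.succ - Q l.castSucc).1 := by
  have hx (l : Fin k) : 0 < (Q l.succ - Q l.castSucc).1 := sub_pos.2 (hQ Fin.castSucc_lt_succ)
  have hslope :=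
    strictMono_slope_of_cross_pos hx fun l l' h => hV.cross_pos_of_sorted hi hj hQ hQV h
  refine ⟨fun l => ⟨hx l, ?_⟩, hslope⟩
  -- the first edge points upwards, and the later ones are steeper
  set l₀ : Fin k := ⟨0, l.pos⟩
  have hy₀ : 0 < (Q l₀.succ - Q l₀.castSucc).2 := by
    have hl₀ : l₀.castSucc = 0 := rfl
    rw [hl₀, hQ0, Prod.snd_sub, sub_zero]
    refine hV.snd_pos hj (hQV ▸ mem_image_of_mem Q (mem_univ _)) fun h => ?_
    exact (Fin.succ_ne_zero l₀) (hQ.injective (by simp [h, hQ0]))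
  have := (div_pos (by exact_mod_cast hy₀) (by exact_mod_cast hx l₀)).trans_le
    (hslope.monotone (show l₀ ≤ l from Nat.zero_le _))
  exact_mod_cast (div_pos_iff_of_pos_right (by exact_mod_cast hx l)).1 this

end IsDiagonalPolygon

lemma sum_ite_lt_eq_sum_range {M : Type*} [AddCommMonoid M] {k : ℕ} (g : Fin k → M) {m : ℕ}
    (hm : m ≤ k) :
    (∑ l : Fin k, if (l : ℕ) < m then g l else 0) =
      ∑ n ∈ range m, if h : n < k then g ⟨n, h⟩ else 0 := by
  rw [sum_fin_eq_sum_range, ← sum_range_add_sum_Ico _ hm, sum_eq_zero (s := Ico m k), add_zero]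
  · refine sum_congr rfl fun n hn => ?_
    rw [mem_range] at hn
    simp [hn, hn.trans_le hm]
  · intro n hn
    rw [mem_Ico] at hn
    simp [hn.1.not_gt]

section Tuples

variable {i j k : ℕ}

def slopeTuples (i j k : ℕ) : Set (Fin k → ℕ × ℕ) :=
  {f | (∀ l, 0 < (f l).1 ∧ 0 < (f l).2) ∧ (∑ l, (f l).1 = i) ∧ (∑ l, (f l).2 = j) ∧
    ∀ l₁ l₂ : Fin k, l₁ < l₂ → ((f l₁).2 : ℚ) / ((f l₁).1 : ℚ) < ((f l₂).2 : ℚ) / ((f l₂).1 : ℚ)}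

def vertex (f : Fin k → ℕ × ℕ) (m : Fin (k + 1)) : ℤ × ℤ :=
  ((∑ l : Fin k, if (l : ℕ) < (m : ℕ) then ((f l).1 : ℤ) else 0),
   (∑ l : Fin k, if (l : ℕ) < (m : ℕ) then ((f l).2 : ℤ) else 0))

def edge (f : Fin k → ℕ × ℕ) (n : ℕ) : ℤ × ℤ :=
  if h : n < k then ((f ⟨n, h⟩).1, (f ⟨n, h⟩).2) else 0

lemma vertex_eq_sum_edge (f : Fin k → ℕ × ℕ) (m : Fin (k + 1)) :
    vertex f m = ∑ n ∈ range m, edge f n := by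
  have hm := Nat.lt_succ_iff.1 m.2
  simp only [vertex, edge, Prod.ext_iff, Prod.fst_sum, Prod.snd_sum, apply_dite Prod.fst,
    apply_dite Prod.snd, Prod.fst_zero, Prod.snd_zero]
  exact ⟨sum_ite_lt_eq_sum_range _ hm, sum_ite_lt_eq_sum_range _ hm⟩

lemma vertex_zero (f : Fin k → ℕ × ℕ) : vertex f 0 = (0, 0) := by
  simp [vertex_eq_sum_edge, Prod.zero_eq_mk]

lemma vertex_succ (f : Fin k → ℕ × ℕ) (l : Fin k) :
    vertex f l.succ = vertex f l.castSucc + (((f l).1 : ℤ), ((f l).2 : ℤ)) := by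
  simp [vertex_eq_sum_edge, sum_range_succ, edge]

lemma vertex_last (f : Fin k → ℕ × ℕ) :
    vertex f (Fin.last k) = (((∑ l, (f l).1 : ℕ) : ℤ), ((∑ l, (f l).2 : ℕ) : ℤ)) := by
  simp [vertex]

lemma isConvexChain_edge {f : Fin k → ℕ × ℕ} (hf : f ∈ slopeTuples i j k) :
    IsConvexChain (edge f) k where
  fst_pos n hn := by simpa [edge, hn] using (hf.1 ⟨n, hn⟩).1
  snd_pos n hn := by simpa [edge, hn] using (hf.1 ⟨n, hn⟩).2
  cross_pos a b hab hb := by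
    have := hf.2.2.2 ⟨a, hab.trans hb⟩ ⟨b, hb⟩ hab
    simp only [← Int.cast_natCast (R := ℚ)] at this
    rw [div_lt_div_iff_cross_pos (by exact_mod_cast (hf.1 _).1) (by exact_mod_cast (hf.1 _).1)]
      at this
    simpa [edge, hb, hab.trans hb] using this

lemma sum_edge {f : Fin k → ℕ × ℕ} (hf : f ∈ slopeTuples i j k) :
    ∑ n ∈ range k, edge f n = ((i : ℤ), (j : ℤ)) := by
  have := vertex_eq_sum_edge f (Fin.last k)
  rw [Fin.val_last, vertex_last, hf.2.1, hf.2.2.1] at this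
  exact this.symm

lemma strictMono_fst_vertex {f : Fin k → ℕ × ℕ} (hf : f ∈ slopeTuples i j k) :
    StrictMono fun m => (vertex f m).1 := by
  simpa only [vertex_eq_sum_edge] using (isConvexChain_edge hf).strictMono_fst_sum

lemma eq_of_vertex_eq {f g : Fin k → ℕ × ℕ} (h : vertex f = vertex g) : f = g := by
  funext l
  have := vertex_succ f l
  rw [h, vertex_succ g l, add_right_inj, Prod.mk.injEq] at this
  exact Prod.ext (by exact_mod_cast this.1.symm) (by exact_mod_cast this.2.symm)

lemma exists_vertex_eq {Q : Fin (k + 1) → ℤ × ℤ} (hQ0 : Q 0 = (0, 0))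
    (hQk : Q (Fin.last k) = ((i : ℤ), (j : ℤ)))
    (hpos : ∀ l : Fin k, 0 < (Q l.succ - Q l.castSucc).1 ∧ 0 < (Q l.succ - Q l.castSucc).2)
    (hslope : StrictMono fun l : Fin k =>
      ((Q l.succ - Q l.castSucc).2 : ℚ) / (Q l.succ - Q l.castSucc).1) :
    ∃ f ∈ slopeTuples i j k, vertex f = Q := by
  set f : Fin k → ℕ × ℕ := fun l =>
    ((Q l.succ - Q l.castSucc).1.toNat, (Q l.succ - Q l.castSucc).2.toNat)
  have hf (l : Fin k) : (((f l).1 : ℤ), ((f l).2 : ℤ)) = Q l.succ - Q l.castSucc :=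
    Prod.ext (Int.toNat_of_nonneg (hpos l).1.le) (Int.toNat_of_nonneg (hpos l).2.le)
  have hvertex : vertex f = Q := funext fun m => by
    induction m using Fin.induction with
    | zero => rw [vertex_zero, hQ0]
    | succ l ih => rw [vertex_succ, ih, hf, add_sub_cancel]
  refine ⟨f, ⟨fun l => ?_, ?_, ?_, fun l₁ l₂ h => ?_⟩, hvertex⟩
  · simpa [← hf] using hpos l
  · have := vertex_last f
    rw [hvertex, hQk, Prod.mk.injEq] at this
    exact_mod_cast this.1.symm
  · have := vertex_last f
    rw [hvertex, hQk, Prod.mk.injEq] at this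
    exact_mod_cast this.2.symm
  · simpa [← hf] using hslope h

end Tuples
end LatticePolygon

open LatticePolygon

theorem stmt7_general (i j k : ℕ) (hi : 0 < i) (hj : 0 < j) :
    Set.BijOn
      (fun f : Fin k → ℕ × ℕ =>
        Finset.image (fun m : Fin (k + 1) =>
          ((∑ l : Fin k, if (l : ℕ) < (m : ℕ) then ((f l).1 : ℤ) else 0),
           (∑ l : Fin k, if (l : ℕ) < (m : ℕ) then ((f l).2 : ℤ) else 0))) Finset.univ)
      {f : Fin k → ℕ × ℕ | (∀ l, 0 < (f l).1 ∧ 0 < (f l).2) ∧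
        (∑ l, (f l).1 = i) ∧ (∑ l, (f l).2 = j) ∧
        ∀ l₁ l₂ : Fin k, l₁ < l₂ →
          ((f l₁).2 : ℚ) / ((f l₁).1 : ℚ) < ((f l₂).2 : ℚ) / ((f l₂).1 : ℚ)}
      {V : Finset (ℤ × ℤ) | V.card = k + 1 ∧ ((0, 0) : ℤ × ℤ) ∈ V ∧ ((i : ℤ), (j : ℤ)) ∈ V ∧
        (∀ v ∈ V, ¬ (((v.1 : ℝ), (v.2 : ℝ)) ∈ convexHull ℝ
            ((fun p : ℤ × ℤ => ((p.1 : ℝ), (p.2 : ℝ))) '' ((V.erase v : Finset (ℤ × ℤ)) : Set (ℤ × ℤ))))) ∧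
        (∀ v ∈ V, v ≠ ((0, 0) : ℤ × ℤ) → v ≠ ((i : ℤ), (j : ℤ)) →
          0 < v.2 ∧ v.1 < (i : ℤ) ∧ (i : ℤ) * v.2 < (j : ℤ) * v.1)} := by
  show Set.BijOn (fun f => univ.image (vertex f)) (slopeTuples i j k)
    {V | IsDiagonalPolygon i j k V}
  have hi' : (0 : ℤ) < i := by exact_mod_cast hi
  have hj' : (0 : ℤ) < j := by exact_mod_cast hj
  refine ⟨fun f hf => ?_, fun f hf g hg hfg => ?_, fun V hV => ?_⟩
  · have := (isConvexChain_edge hf).isDiagonalPolygon_image (sum_edge hf)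
    rwa [← funext (vertex_eq_sum_edge f)] at this
  · exact eq_of_vertex_eq (eq_of_strictMono_fst (strictMono_fst_vertex hf)
      (strictMono_fst_vertex hg) hfg)
  · obtain ⟨Q, hQ, hQV, hQ0, hQk⟩ := hV.exists_sorted_enumeration hi' hj'
    obtain ⟨hpos, hslope⟩ := hV.edge_pos_and_strictMono_slope_of_sorted hi' hj' hQ hQV hQ0
    obtain ⟨f, hf, rfl⟩ := exists_vertex_eq hQ0 hQk hpos hslope
    exact ⟨f, hf, hQV⟩

/-- Bijection between tuples `((x_l,y_l))_{l≤k}` (positive coordinates, sums `i`, `j`, strictly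
increasing slopes) and convex `(k+1)`-gons with lattice vertices contained in the triangle `Δ`
with vertices `(0,0),(i,0),(i,j)`, having the segment `L` from `(0,0)` to `(i,j)` as an edge and
meeting the horizontal and vertical edges of `Δ` only at `(0,0)` and `(i,j)`.  A polygon is
encoded by its vertex set: a finset of `ℤ × ℤ` of cardinality `k+1` in convex position (no
element lies in the convex hull of the others), containing `(0,0)` and `(i,j)`, all other
vertices lying strictly inside `Δ` off the line `L` (`0 < y`, `x < i`, `i·y < j·x`). -/
theorem stmt7 (i j k : ℕ) (hi : 0 < i) (hj : 0 < j) (hk : 1 ≤ k) :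
    Set.BijOn
      (fun f : Fin k → ℕ × ℕ =>
        Finset.image (fun m : Fin (k + 1) =>
          ((∑ l : Fin k, if (l : ℕ) < (m : ℕ) then ((f l).1 : ℤ) else 0),
           (∑ l : Fin k, if (l : ℕ) < (m : ℕ) then ((f l).2 : ℤ) else 0))) Finset.univ)
      {f : Fin k → ℕ × ℕ | (∀ l, 0 < (f l).1 ∧ 0 < (f l).2) ∧
        (∑ l, (f l).1 = i) ∧ (∑ l, (f l).2 = j) ∧
        ∀ l₁ l₂ : Fin k, l₁ < l₂ →
          ((f l₁).2 : ℚ) / ((f l₁).1 : ℚ) < ((f l₂).2 : ℚ) / ((f l₂).1 : ℚ)}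
      {V : Finset (ℤ × ℤ) | V.card = k + 1 ∧ ((0, 0) : ℤ × ℤ) ∈ V ∧ ((i : ℤ), (j : ℤ)) ∈ V ∧
        (∀ v ∈ V, ¬ (((v.1 : ℝ), (v.2 : ℝ)) ∈ convexHull ℝ
            ((fun p : ℤ × ℤ => ((p.1 : ℝ), (p.2 : ℝ))) '' ((V.erase v : Finset (ℤ × ℤ)) : Set (ℤ × ℤ))))) ∧
        (∀ v ∈ V, v ≠ ((0, 0) : ℤ × ℤ) → v ≠ ((i : ℤ), (j : ℤ)) →
          0 < v.2 ∧ v.1 < (i : ℤ) ∧ (i : ℤ) * v.2 < (j : ℤ) * v.1)} :=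
  stmt7_general i j k hi hj
end

section
/- Fix positive integers i, j, let Δ be the triangle with vertices (0,0), (i,0), (i,j), and let L be the segment from (0,0) to (i,j). Let C be the set of convex polygons with lattice-point vertices contained in Δ, having L as an edge, and meeting the horizontal and vertical edges of Δ only at (0,0) and (i,j). For P ∈ C, let u(P) be the number of lattice points that are interior to Δ but not contained in P, and let v(P) be the number of vertices of P (with v(L) = 2). Then ∑_{P ∈ C} x^{u(P)} (1 − x)^{v(P) − 2} = 1 as an identity of polynomials in x. -/
/-!
Mark every lattice point interior to `Δ` independently with probability `x`, and let `P` be the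
convex hull of the unmarked points together with the endpoints of `L`. The vertices of `P` other
than those endpoints are unmarked interior points, so `P ∈ C`; and a given `P ∈ C` arises exactly
when the `u(P)` interior points outside `P` are marked and its `v(P) - 2` other vertices are not,
the remaining points being free. Hence `P` occurs with probability `x^u(P) (1 - x)^(v(P) - 2)`,
and these probabilities add up to `1`.
-/

open scoped Classical

open Finset

theorem Finset.sum_Icc_pow_mul_one_sub_pow {α R : Type*} [DecidableEq α] [CommRing R] (x : R)
    {A B : Finset α} (hAB : A ⊆ B) {n : ℕ} (hn : #B ≤ n) :
    ∑ M ∈ Icc A B, x ^ #M * (1 - x) ^ (n - #M) = x ^ #A * (1 - x) ^ (n - #B) := by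
  have hinj : Set.InjOn (A ∪ ·) ((B \ A).powerset : Set (Finset α)) := by
    intro W₁ h₁ W₂ h₂ h
    simp only [coe_powerset, Set.mem_preimage, Set.mem_powerset_iff, coe_subset] at h₁ h₂
    rw [← union_sdiff_cancel_left (disjoint_of_subset_right h₁ disjoint_sdiff),
      ← union_sdiff_cancel_left (disjoint_of_subset_right h₂ disjoint_sdiff)]
    exact congrArg (· \ A) h
  have hBA : #(B \ A) = #B - #A := card_sdiff_of_subset hAB
  have hAB_card := card_le_card hAB
  calc ∑ M ∈ Icc A B, x ^ #M * (1 - x) ^ (n - #M)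
      = ∑ W ∈ (B \ A).powerset,
          x ^ #A * (1 - x) ^ (n - #B) * (x ^ #W * (1 - x) ^ (#(B \ A) - #W)) := by
        rw [Icc_eq_image_powerset hAB, sum_image hinj]
        refine sum_congr rfl fun W hW => ?_
        have hW := mem_powerset.1 hW
        have hWB := card_le_card hW
        rw [card_union_of_disjoint (disjoint_of_subset_right hW disjoint_sdiff),
          show n - (#A + #W) = (n - #B) + (#(B \ A) - #W) by omega]
        ring
    _ = x ^ #A * (1 - x) ^ (n - #B) := by
        rw [← mul_sum, sum_pow_mul_eq_add_pow, add_sub_cancel, one_pow, mul_one]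

section ExtremePoints

variable {E : Type*} [NormedAddCommGroup E] [NormedSpace ℝ E] {s : Set E} {x : E}

theorem Set.Finite.convexHull_extremePoints_convexHull (hs : s.Finite) :
    convexHull ℝ ((convexHull ℝ s).extremePoints ℝ) = convexHull ℝ s := by
  have h := closure_convexHull_extremePoints (hs.isCompact_convexHull ℝ) (convex_convexHull ℝ s)
  rwa [(hs.subset extremePoints_convexHull_subset).isClosed_convexHull ℝ |>.closure_eq] at h

theorem Set.Finite.notMem_convexHull_sdiff_iff (hs : s.Finite) (hx : x ∈ s) :
    x ∉ convexHull ℝ (s \ {x}) ↔ x ∈ (convexHull ℝ s).extremePoints ℝ := by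
  refine ⟨fun h => ?_, fun h => ?_⟩
  · by_contra hext
    have hsub : (convexHull ℝ s).extremePoints ℝ ⊆ s \ {x} := fun y hy =>
      ⟨extremePoints_convexHull_subset hy, fun hyx => hext (mem_singleton_iff.1 hyx ▸ hy)⟩
    refine h (convexHull_mono hsub ?_)
    rw [hs.convexHull_extremePoints_convexHull]
    exact subset_convexHull ℝ s hx
  · rw [(convex_convexHull ℝ s).mem_extremePoints_iff_mem_sdiff_convexHull_sdiff] at h
    exact fun hx' => h.2 (convexHull_mono (sdiff_subset_sdiff_left (subset_convexHull ℝ s)) hx')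

end ExtremePoints

namespace Finset

variable {α E : Type*} [NormedAddCommGroup E] [NormedSpace ℝ E] (f : α → E)

noncomputable def hullVertices (U : Finset α) : Finset α :=
  U.filter fun v => f v ∈ (convexHull ℝ (f '' U)).extremePoints ℝ

noncomputable def outsideHull (S V : Finset α) : Finset α :=
  S.filter fun p => f p ∉ convexHull ℝ (f '' V)

variable {f}

theorem image_hullVertices (U : Finset α) :
    f '' hullVertices f U = (convexHull ℝ (f '' U)).extremePoints ℝ := by
  refine Set.Subset.antisymm ?_ fun y hy => ?_
  · rintro _ ⟨v, hv, rfl⟩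
    exact (mem_filter.1 hv).2
  · obtain ⟨v, hv, rfl⟩ := extremePoints_convexHull_subset hy
    exact ⟨v, mem_filter.2 ⟨hv, hy⟩, rfl⟩

theorem convexHull_image_hullVertices (U : Finset α) :
    convexHull ℝ (f '' hullVertices f U) = convexHull ℝ (f '' U) := by
  rw [image_hullVertices, ((U.finite_toSet).image f).convexHull_extremePoints_convexHull]

theorem hullVertices_hullVertices (U : Finset α) :
    hullVertices f (hullVertices f U) = hullVertices f U := by
  ext v
  rw [hullVertices, mem_filter, convexHull_image_hullVertices, hullVertices, mem_filter]
  tauto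

theorem hullVertices_eq_self_iff [DecidableEq α] (hf : Function.Injective f) (V : Finset α) :
    hullVertices f V = V ↔ ∀ v ∈ V, f v ∉ convexHull ℝ (f '' ↑(V.erase v)) := by
  have hiff : ∀ v ∈ V, f v ∉ convexHull ℝ (f '' ↑(V.erase v)) ↔
      f v ∈ (convexHull ℝ (f '' V)).extremePoints ℝ := fun v hv => by
    rw [coe_erase, Set.image_sdiff hf, Set.image_singleton]
    exact ((V.finite_toSet).image f).notMem_convexHull_sdiff_iff ⟨v, hv, rfl⟩
  rw [hullVertices, filter_eq_self]
  exact forall₂_congr fun v hv => (hiff v hv).symm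

theorem hullVertices_eq_of_subset (hf : Function.Injective f) {U V : Finset α}
    (hV : hullVertices f V = V) (hVU : V ⊆ U) (hUV : f '' U ⊆ convexHull ℝ (f '' V)) :
    hullVertices f U = V := by
  have hhull : convexHull ℝ (f '' U) = convexHull ℝ (f '' V) :=
    (convexHull_min hUV (convex_convexHull ℝ _)).antisymm
      (convexHull_mono (Set.image_mono (coe_subset.2 hVU)))
  ext v
  rw [hullVertices, mem_filter, hhull]
  refine ⟨fun ⟨_, hv⟩ => ?_, fun hv => ⟨hVU hv, ?_⟩⟩
  · obtain ⟨w, hw, hwv⟩ := extremePoints_convexHull_subset hv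
    exact hf hwv ▸ hw
  · rw [← hV] at hv
    exact (mem_filter.1 hv).2

theorem mem_hullVertices_of_forall_ne {U : Finset α} {v : α} {K : Set E} (hv : v ∈ U)
    (hK : Convex ℝ K) (hUK : ∀ u ∈ U, u ≠ v → f u ∈ K) (hvK : f v ∉ K) :
    v ∈ hullVertices f U := by
  refine mem_filter.2 ⟨hv, ((U.finite_toSet.image f).notMem_convexHull_sdiff_iff
    ⟨v, hv, rfl⟩).1 fun h => hvK (convexHull_min ?_ hK h)⟩
  rintro _ ⟨⟨u, hu, rfl⟩, hne⟩
  exact hUK u hu fun huv => hne (huv ▸ rfl)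

section Polygons

variable [DecidableEq α] {S B : Finset α}

variable (f) in
noncomputable def convexPolygons (S B : Finset α) : Finset (Finset α) :=
  (S ∪ B).powerset.filter fun V => B ⊆ V ∧ hullVertices f V = V

theorem mem_convexPolygons {V : Finset α} :
    V ∈ convexPolygons f S B ↔ V ⊆ S ∪ B ∧ B ⊆ V ∧ hullVertices f V = V := by
  rw [convexPolygons, mem_filter, mem_powerset]

theorem hullVertices_mem_convexPolygons (hB : ∀ U, B ⊆ U → U ⊆ S ∪ B → B ⊆ hullVertices f U)
    (M : Finset α) : hullVertices f (S \ M ∪ B) ∈ convexPolygons f S B := by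
  have hU : S \ M ∪ B ⊆ S ∪ B := union_subset_union sdiff_subset subset_rfl
  exact mem_convexPolygons.2 ⟨(filter_subset _ _).trans hU, hB _ subset_union_right hU,
    hullVertices_hullVertices _⟩

theorem outsideHull_subset_sdiff (S V : Finset α) : outsideHull f S V ⊆ S \ V := fun p hp => by
  obtain ⟨hpS, hp⟩ := mem_filter.1 hp
  exact mem_sdiff.2 ⟨hpS, fun hpV => hp (subset_convexHull ℝ _ ⟨p, hpV, rfl⟩)⟩

theorem filter_powerset_hullVertices_eq (hf : Function.Injective f) (hSB : Disjoint S B)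
    {V : Finset α} (hV : V ∈ convexPolygons f S B) :
    {M ∈ S.powerset | hullVertices f (S \ M ∪ B) = V} = Icc (outsideHull f S V) (S \ V) := by
  obtain ⟨hVSB, hBV, hVV⟩ := mem_convexPolygons.1 hV
  ext M
  rw [mem_filter, mem_powerset, mem_Icc]
  constructor
  · rintro ⟨hM, rfl⟩
    refine ⟨fun p hp => ?_, fun p hpM => mem_sdiff.2 ⟨hM hpM, fun hpV => ?_⟩⟩
    · obtain ⟨hpS, hp⟩ := mem_filter.1 hp
      by_contra hpM
      rw [convexHull_image_hullVertices] at hp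
      exact hp (subset_convexHull ℝ _ ⟨p, by simp [hpS, hpM], rfl⟩)
    · have hpU := (filter_subset _ _) hpV
      simp only [mem_union, mem_sdiff] at hpU
      exact hpU.elim (fun h => h.2 hpM) (disjoint_left.1 hSB (hM hpM))
  · rintro ⟨hout, hMV⟩
    refine ⟨hMV.trans sdiff_subset, hullVertices_eq_of_subset hf hVV (fun v hv => ?_) ?_⟩
    · rcases mem_union.1 (hVSB hv) with hvS | hvB
      · exact mem_union_left _ (mem_sdiff.2 ⟨hvS, fun hvM => (mem_sdiff.1 (hMV hvM)).2 hv⟩)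
      · exact mem_union_right _ hvB
    · rintro _ ⟨u, hu, rfl⟩
      rcases mem_union.1 hu with hu | hu
      · obtain ⟨huS, huM⟩ := mem_sdiff.1 hu
        by_contra h
        exact huM (hout (mem_filter.2 ⟨huS, h⟩))
      · exact subset_convexHull ℝ _ ⟨u, hBV hu, rfl⟩

theorem card_sub_card_sdiff_of_mem_convexPolygons (hSB : Disjoint S B) {V : Finset α}
    (hV : V ∈ convexPolygons f S B) : #S - #(S \ V) = #V - #B := by
  obtain ⟨hVSB, hBV, -⟩ := mem_convexPolygons.1 hV
  have hVS : S ∩ V = V \ B := by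
    ext p
    simp only [mem_inter, mem_sdiff]
    exact ⟨fun h => ⟨h.2, disjoint_left.1 hSB h.1⟩,
      fun h => ⟨(mem_union.1 (hVSB h.1)).resolve_right h.2, h.1⟩⟩
  rw [← card_sdiff_of_subset hBV, ← hVS, ← card_sdiff_add_card_inter S V, Nat.add_sub_cancel_left]

theorem sum_convexPolygons_pow_mul_one_sub_pow (hf : Function.Injective f) (hSB : Disjoint S B)
    (hB : ∀ U, B ⊆ U → U ⊆ S ∪ B → B ⊆ hullVertices f U) (x : ℝ) :
    ∑ V ∈ convexPolygons f S B, x ^ #(outsideHull f S V) * (1 - x) ^ (#V - #B) = 1 := by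
  calc ∑ V ∈ convexPolygons f S B, x ^ #(outsideHull f S V) * (1 - x) ^ (#V - #B)
      = ∑ V ∈ convexPolygons f S B, ∑ M ∈ S.powerset with hullVertices f (S \ M ∪ B) = V,
          x ^ #M * (1 - x) ^ (#S - #M) := by
        refine sum_congr rfl fun V hV => ?_
        rw [filter_powerset_hullVertices_eq hf hSB hV, sum_Icc_pow_mul_one_sub_pow x
          (outsideHull_subset_sdiff S V) (card_le_card sdiff_subset),
          card_sub_card_sdiff_of_mem_convexPolygons hSB hV]
    _ = ∑ M ∈ S.powerset, x ^ #M * (1 - x) ^ (#S - #M) :=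
        sum_fiberwise_of_maps_to (fun M _ => hullVertices_mem_convexPolygons hB M) _
    _ = 1 := by rw [sum_pow_mul_eq_add_pow, add_sub_cancel, one_pow]

end Polygons

end Finset

theorem interior_setOf_le_of_ne_zero {E : Type*} [AddCommGroup E] [TopologicalSpace E]
    [ContinuousAdd E] [Module ℝ E] [ContinuousSMul ℝ E] (ℓ : StrongDual ℝ E) (hℓ : ℓ ≠ 0)
    (c : ℝ) : interior {x | ℓ x ≤ c} = {x | ℓ x < c} := by
  have h := (ℓ.isOpenMap_of_ne_zero hℓ).preimage_interior_eq_interior_preimage ℓ.continuous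
    (Set.Iic c)
  rw [interior_Iic] at h
  exact h.symm

section Triangle

variable {a b : ℝ}

theorem convexHull_triangle (ha : 0 < a) (hb : 0 < b) :
    convexHull ℝ {((0 : ℝ), (0 : ℝ)), (a, 0), (a, b)} =
      {p : ℝ × ℝ | 0 ≤ p.2 ∧ p.1 ≤ a ∧ a * p.2 ≤ b * p.1} := by
  refine (convexHull_min ?_ ?_).antisymm fun p ⟨hp₂, hp₁, hp⟩ => ?_
  · rintro p (rfl | rfl | rfl) <;> simp [ha.le, hb.le, mul_comm]
    positivity
  · intro p hp q hq s t hs ht hst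
    simp only [Set.mem_ofPred_eq, Prod.smul_fst, Prod.smul_snd, Prod.fst_add, Prod.snd_add,
      smul_eq_mul] at hp hq ⊢
    refine ⟨by nlinarith, by nlinarith, ?_⟩
    nlinarith [mul_le_mul_of_nonneg_left hp.2.2 hs, mul_le_mul_of_nonneg_left hq.2.2 ht]
  · -- barycentric coordinates of `p`
    have h := (convex_convexHull ℝ {((0 : ℝ), (0 : ℝ)), (a, 0), (a, b)}).sum_mem
      (t := Finset.univ) (w := ![1 - p.1 / a, p.1 / a - p.2 / b, p.2 / b])
      (z := ![((0 : ℝ), (0 : ℝ)), (a, 0), (a, b)]) ?_ ?_ ?_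
    · convert h using 1
      ext
      · simp [Fin.sum_univ_three]
        field_simp
        ring
      · simp [Fin.sum_univ_three]
        field_simp
    · intro k _
      fin_cases k
      · simpa using div_le_one_of_le₀ hp₁ ha.le
      · simpa [div_le_div_iff₀ hb ha, mul_comm] using hp
      · simpa using div_nonneg hp₂ hb.le
    · simp [Fin.sum_univ_three]
    · intro k _
      fin_cases k
      all_goals exact subset_convexHull ℝ _ (by simp)

theorem interior_convexHull_triangle (ha : 0 < a) (hb : 0 < b) :
    interior (convexHull ℝ {((0 : ℝ), (0 : ℝ)), (a, 0), (a, b)}) =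
      {p : ℝ × ℝ | 0 < p.2 ∧ p.1 < a ∧ a * p.2 < b * p.1} := by
  let fst := ContinuousLinearMap.fst ℝ ℝ ℝ
  let snd := ContinuousLinearMap.snd ℝ ℝ ℝ
  have hne : ∀ v : ℝ × ℝ, ∀ ℓ : StrongDual ℝ (ℝ × ℝ), ℓ v ≠ 0 → ℓ ≠ 0 := fun v ℓ h h0 => by
    simp [h0] at h
  have hT : {p : ℝ × ℝ | 0 ≤ p.2 ∧ p.1 ≤ a ∧ a * p.2 ≤ b * p.1} =
      {p | (-snd) p ≤ 0} ∩ {p | fst p ≤ a} ∩ {p | (a • snd - b • fst) p ≤ 0} := by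
    ext p
    simp [fst, snd, and_assoc]
  rw [convexHull_triangle ha hb, hT, interior_inter, interior_inter,
    interior_setOf_le_of_ne_zero _ (hne (0, 1) _ (by simp [snd])),
    interior_setOf_le_of_ne_zero _ (hne (1, 0) _ (by simp [fst])),
    interior_setOf_le_of_ne_zero _ (hne (0, 1) _ (by simp [fst, snd, ha.ne']))]
  ext p
  simp [fst, snd, sub_neg, and_assoc]

end Triangle

notation "cast₂" => (Prod.map Int.cast Int.cast : ℤ × ℤ → ℝ × ℝ)

theorem injective_cast₂ : Function.Injective cast₂ :=
  Int.cast_injective.prodMap Int.cast_injective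

section LatticeTriangle

variable {i j : ℕ}

noncomputable def latticeTriangleInterior (i j : ℕ) : Finset (ℤ × ℤ) :=
  {p ∈ Icc ((0 : ℤ), (0 : ℤ)) ((i : ℤ), (j : ℤ)) | 0 < p.2 ∧ p.1 < i ∧ (i : ℤ) * p.2 < j * p.1}

theorem mem_latticeTriangleInterior {p : ℤ × ℤ} :
    p ∈ latticeTriangleInterior i j ↔ 0 < p.2 ∧ p.1 < i ∧ (i : ℤ) * p.2 < j * p.1 := by
  rw [latticeTriangleInterior, mem_filter, mem_Icc, Prod.le_def, Prod.le_def]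
  refine ⟨And.right, fun ⟨h₂, h₁, h⟩ => ⟨⟨⟨?_, h₂.le⟩, h₁.le, ?_⟩, h₂, h₁, h⟩⟩ <;> nlinarith

theorem cast₂_mem_interior_triangle_iff (hi : 0 < i) (hj : 0 < j) (p : ℤ × ℤ) :
    cast₂ p ∈
        interior (convexHull ℝ {((0 : ℝ), (0 : ℝ)), ((i : ℝ), (0 : ℝ)), ((i : ℝ), (j : ℝ))}) ↔
      p ∈ latticeTriangleInterior i j := by
  rw [interior_convexHull_triangle (by positivity) (by positivity), mem_latticeTriangleInterior]
  simp only [Set.mem_ofPred_eq, Prod.map_fst, Prod.map_snd]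
  norm_cast

theorem subset_hullVertices_of_subset_latticeTriangle (hi : 0 < i) (hj : 0 < j)
    (U : Finset (ℤ × ℤ)) (hBU : {(0, 0), ((i : ℤ), (j : ℤ))} ⊆ U)
    (hU : U ⊆ latticeTriangleInterior i j ∪ {(0, 0), ((i : ℤ), (j : ℤ))}) :
    {(0, 0), ((i : ℤ), (j : ℤ))} ⊆ hullVertices cast₂ U := by
  have hmem : ∀ u ∈ U, u = (0, 0) ∨ u = ((i : ℤ), (j : ℤ)) ∨
      (0 < u.2 ∧ u.1 < i ∧ (i : ℤ) * u.2 < j * u.1) := fun u hu => by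
    simpa [mem_latticeTriangleInterior, or_comm, or_assoc] using hU hu
  rw [insert_subset_iff, singleton_subset_iff] at hBU ⊢
  constructor
  · refine mem_hullVertices_of_forall_ne hBU.1
      (convex_halfSpace_gt (LinearMap.fst ℝ ℝ ℝ).isLinear (0 : ℝ)) (fun u hu hne => ?_) (by simp)
    rcases hmem u hu with h | rfl | ⟨h₂, -, h⟩
    · exact absurd h hne
    · simpa using hi
    · change (0 : ℝ) < u.1
      exact_mod_cast (by nlinarith : 0 < u.1)
  · refine mem_hullVertices_of_forall_ne hBU.2
      (convex_halfSpace_lt (LinearMap.snd ℝ ℝ ℝ).isLinear (j : ℝ)) (fun u hu hne => ?_) (by simp)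
    rcases hmem u hu with rfl | h | ⟨-, h₁, h⟩
    · simpa using hj
    · exact absurd h hne
    · change (u.2 : ℝ) < j
      exact_mod_cast (by nlinarith : u.2 < j)

theorem origin_ne_corner (hi : 0 < i) : ((0, 0) : ℤ × ℤ) ≠ ((i : ℤ), (j : ℤ)) := by
  simp only [ne_eq, Prod.mk.injEq, not_and]
  omega

theorem filter_eq_convexPolygons_latticeTriangle (hi : 0 < i) :
    (Icc ((0 : ℤ), (0 : ℤ)) ((i : ℤ), (j : ℤ))).powerset.filter (fun V =>
      2 ≤ V.card ∧ ((0, 0) : ℤ × ℤ) ∈ V ∧ ((i : ℤ), (j : ℤ)) ∈ V ∧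
      (∀ v ∈ V, cast₂ v ∉ convexHull ℝ (cast₂ '' ((V.erase v : Finset (ℤ × ℤ)) : Set (ℤ × ℤ)))) ∧
      (∀ v ∈ V, v ≠ ((0, 0) : ℤ × ℤ) → v ≠ ((i : ℤ), (j : ℤ)) →
        0 < v.2 ∧ v.1 < (i : ℤ) ∧ (i : ℤ) * v.2 < (j : ℤ) * v.1)) =
    convexPolygons cast₂ (latticeTriangleInterior i j) {(0, 0), ((i : ℤ), (j : ℤ))} := by
  ext V
  rw [mem_filter, mem_powerset, mem_convexPolygons, hullVertices_eq_self_iff injective_cast₂,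
    insert_subset_iff, singleton_subset_iff]
  constructor
  · rintro ⟨-, -, ho, hz, hconv, hint⟩
    refine ⟨fun v hv => ?_, ⟨ho, hz⟩, hconv⟩
    have := hint v hv
    rw [mem_union, mem_latticeTriangleInterior, mem_insert, mem_singleton]
    tauto
  · rintro ⟨hV, ⟨ho, hz⟩, hconv⟩
    refine ⟨?_, ?_, ho, hz, hconv, fun v hv hvo hvz => ?_⟩
    · refine hV.trans (union_subset (filter_subset _ _) ?_)
      simp [insert_subset_iff, Prod.le_def]
    · rw [← card_pair (origin_ne_corner hi)]
      exact card_le_card (insert_subset ho (singleton_subset_iff.2 hz))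
    · exact mem_latticeTriangleInterior.1
        ((mem_union.1 (hV hv)).resolve_right (by simp [hvo, hvz]))

end LatticeTriangle

/-- Main combinatorial lemma: with `Δ` the triangle with vertices `(0,0),(i,0),(i,j)` and `C` the
(finite) set of convex lattice polygons contained in `Δ`, having the segment `L` from `(0,0)` to
`(i,j)` as an edge and meeting the horizontal/vertical edges of `Δ` only at `(0,0)` and `(i,j)`
(each polygon encoded by its vertex finset, in convex position), one has
`∑_{P ∈ C} x^{u(P)} (1 − x)^{v(P) − 2} = 1`, where `u(P)` is the number of lattice points
interior to `Δ` not contained in `P`, and `v(P)` is the number of vertices of `P`. -/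
theorem stmt9 (i j : ℕ) (hi : 0 < i) (hj : 0 < j)
    (coe : ℤ × ℤ → ℝ × ℝ) (hcoe : coe = fun p => ((p.1 : ℝ), (p.2 : ℝ)))
    (Δ : Set (ℝ × ℝ))
    (hΔ : Δ = convexHull ℝ {((0 : ℝ), (0 : ℝ)), ((i : ℝ), (0 : ℝ)), ((i : ℝ), (j : ℝ))})
    (C : Finset (Finset (ℤ × ℤ)))
    (hC : C = (Finset.Icc ((0 : ℤ), (0 : ℤ)) ((i : ℤ), (j : ℤ))).powerset.filter (fun V =>
      2 ≤ V.card ∧ ((0, 0) : ℤ × ℤ) ∈ V ∧ ((i : ℤ), (j : ℤ)) ∈ V ∧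
      (∀ v ∈ V, coe v ∉ convexHull ℝ (coe '' ((V.erase v : Finset (ℤ × ℤ)) : Set (ℤ × ℤ)))) ∧
      (∀ v ∈ V, v ≠ ((0, 0) : ℤ × ℤ) → v ≠ ((i : ℤ), (j : ℤ)) →
        0 < v.2 ∧ v.1 < (i : ℤ) ∧ (i : ℤ) * v.2 < (j : ℤ) * v.1))) :
    ∀ x : ℝ, ∑ V ∈ C,
        x ^ ({p : ℤ × ℤ | coe p ∈ interior Δ ∧
              coe p ∉ convexHull ℝ (coe '' ((V : Finset (ℤ × ℤ)) : Set (ℤ × ℤ)))}.ncard)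
          * (1 - x) ^ (V.card - 2) = 1 := by
  intro x
  obtain rfl : coe = cast₂ := hcoe
  subst hΔ hC
  have hdisj : Disjoint (latticeTriangleInterior i j) {(0, 0), ((i : ℤ), (j : ℤ))} := by
    simp [mem_latticeTriangleInterior]
  rw [filter_eq_convexPolygons_latticeTriangle hi]
  refine Eq.trans (sum_congr rfl fun V _ => ?_) (sum_convexPolygons_pow_mul_one_sub_pow
    injective_cast₂ hdisj (subset_hullVertices_of_subset_latticeTriangle hi hj) x)
  rw [card_pair (origin_ne_corner hi), ← Set.ncard_coe_finset (outsideHull _ _ _)]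
  congr 3
  ext p
  simp [outsideHull, cast₂_mem_interior_triangle_iff hi hj]
end
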